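/- Suppose n = |P| is even and every connected component of the seat graph G is a single edge (G is a disjoint union of n/2 edges). Then an envy-free arrangement exists if and only if P can be partitioned into n/2 pairs {p, q} such that f_p(q) ≥ f_p(r) for every r ∈ P \ {p} and f_q(p) ≥ f_q(r) for every r ∈ P \ {q} (i.e., each agent in the pair is a most-preferred agent of the other). -/

import Mathlib

open scoped Classical

noncomputable section

namespace SeatArrangement

variable {P V : Type*}

/-- The utility of agent `p` under arrangement `π`:
the sum, over the seat-graph neighbors `v` of `π p`, of `p`'s preference for the agent seated
at `v`. -/
def utility [Fintype V] (G : SimpleGraph V) (f : P → P → ℝ) (π : P ≃ V) (p : P) : ℝ :=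
  ∑ v : V, if G.Adj (π p) v then f p (π.symm v) else 0

/-- The social welfare of an arrangement: the sum of the utilities of all agents. -/
def sw [Fintype P] [Fintype V] (G : SimpleGraph V) (f : P → P → ℝ) (π : P ≃ V) : ℝ :=
  ∑ p : P, utility G f π p

/-- The `(p,q)`-swap arrangement of `π`. -/
def swapArr (π : P ≃ V) (p q : P) : P ≃ V := (Equiv.swap p q).trans π

/-- `{p, q}` is a blocking pair for `π`: both agents strictly improve by swapping seats. -/
def blocking [Fintype V] (G : SimpleGraph V) (f : P → P → ℝ) (π : P ≃ V) (p q : P) : Prop :=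
  p ≠ q ∧ utility G f π p < utility G f (swapArr π p q) p
        ∧ utility G f π q < utility G f (swapArr π p q) q

/-- An arrangement is stable if it has no blocking pair. -/
def stable [Fintype V] (G : SimpleGraph V) (f : P → P → ℝ) (π : P ≃ V) : Prop :=
  ∀ p q : P, ¬ blocking G f π p q

/-- An arrangement is envy-free if no agent would strictly improve by taking
another agent's seat (via a swap). -/
def envyFree [Fintype V] (G : SimpleGraph V) (f : P → P → ℝ) (π : P ≃ V) : Prop :=
  ∀ p q : P, p ≠ q → utility G f (swapArr π p q) p ≤ utility G f π p

/-- The least utility of an agent under `π` (for a finite nonempty set of agents, the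
infimum of the range of utilities is the minimum utility). -/
def minUtil [Fintype V] (G : SimpleGraph V) (f : P → P → ℝ) (π : P ≃ V) : ℝ :=
  sInf (Set.range (utility G f π))

/-- A maximin arrangement maximizes the least utility of an agent. -/
def maximin [Fintype V] (G : SimpleGraph V) (f : P → P → ℝ) (πf : P ≃ V) : Prop :=
  ∀ π : P ≃ V, minUtil G f π ≤ minUtil G f πf

/-- A maximum arrangement maximizes the social welfare. -/
def maximum [Fintype P] [Fintype V] (G : SimpleGraph V) (f : P → P → ℝ) (πm : P ≃ V) : Prop :=
  ∀ π : P ≃ V, sw G f π ≤ sw G f πm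

end SeatArrangement

open SeatArrangement

/-
In a graph in which every vertex has exactly one neighbour, an agent's utility is its preference
for its seatmate, and an agent who swaps with the seatmate of `r` gets `r` as new seatmate. So an
arrangement is envy-free exactly when every agent's seatmate is one of its most-preferred agents,
and the seatmate relation is a fixed-point-free involution on the agents. Conversely, any two
fixed-point-free involutions on finite sets of the same size have the same cycle type (all
2-cycles), hence are conjugate, so a pairing of the agents can be realised as the seatmate
relation of some arrangement.
-/

namespace Equiv.Perm

variable {α : Type*} [Fintype α]

theorem cycleType_eq_replicate_two_of_involutive {σ : Perm α} (hσ : Function.Involutive σ)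
    (hfix : ∀ a, σ a ≠ a) : σ.cycleType = Multiset.replicate (Fintype.card α / 2) 2 := by
  have hrep : σ.cycleType = Multiset.replicate σ.cycleType.card 2 :=
    cycleType_of_pow_prime_eq_one (by ext a; simp [sq, hσ a])
  have hsupp : σ.support = Finset.univ := by
    ext a
    simpa [mem_support] using hfix a
  have hsum : σ.cycleType.card * 2 = Fintype.card α := by
    rw [← Finset.card_univ, ← hsupp, ← sum_cycleType, hrep, Multiset.sum_replicate,
      Multiset.card_replicate, smul_eq_mul]
  rw [hrep, ← hsum, Nat.mul_div_cancel _ two_pos]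

end Equiv.Perm

theorem Function.Involutive.exists_equiv_comp_eq_of_ne_self {α β : Type*} [Fintype α]
    (e : α ≃ β) {μ : α → α} {ν : β → β} (hμ : Function.Involutive μ)
    (hν : Function.Involutive ν) (hμfix : ∀ a, μ a ≠ a) (hνfix : ∀ b, ν b ≠ b) :
    ∃ π : α ≃ β, ∀ a, π (μ a) = ν (π a) := by
  let ν' : Equiv.Perm α := e.symm.permCongr (hν.toPerm ν)
  have hν' : Function.Involutive ν' := fun a => by simp [ν', hν (e a)]
  have hν'fix : ∀ a, ν' a ≠ a := fun a h => hνfix (e a) (by simpa [ν'] using congrArg e h)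
  have hconj : IsConj (hμ.toPerm μ) ν' := by
    rw [Equiv.Perm.isConj_iff_cycleType_eq,
      Equiv.Perm.cycleType_eq_replicate_two_of_involutive hμ hμfix,
      Equiv.Perm.cycleType_eq_replicate_two_of_involutive hν' hν'fix]
  obtain ⟨c, hc⟩ := isConj_iff.mp hconj
  refine ⟨c.trans e, fun a => ?_⟩
  have : c (μ a) = ν' (c a) := by
    rw [← hc]
    simp
  simp [this, ν']

namespace SeatArrangement

variable {P V : Type*}

theorem swapArr_apply_left (π : P ≃ V) (p q : P) : swapArr π p q p = π q := by
  simp [swapArr]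

theorem swapArr_symm_apply (π : P ≃ V) (p q : P) (v : V) :
    (swapArr π p q).symm v = Equiv.swap p q (π.symm v) := by
  simp [swapArr]

theorem involutive_equiv_conj {ν : V → V} (hν : Function.Involutive ν) (π : P ≃ V) :
    Function.Involutive fun p => π.symm (ν (π p)) :=
  fun p => by simp [hν (π p)]

theorem equiv_conj_ne_self {ν : V → V} (hν : ∀ v, ν v ≠ v) (π : P ≃ V) (p : P) :
    π.symm (ν (π p)) ≠ p :=
  fun h => hν (π p) (by simpa using congrArg π h)

section SeatmateGraph

variable {G : SimpleGraph V} {ν : V → V}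

theorem involutive_of_adj_iff (hG : ∀ v w, G.Adj v w ↔ w = ν v) : Function.Involutive ν :=
  fun v => ((hG _ _).mp ((hG v _).mpr rfl).symm).symm

theorem ne_self_of_adj_iff (hG : ∀ v w, G.Adj v w ↔ w = ν v) (v : V) : ν v ≠ v :=
  fun h => G.irrefl ((hG v v).mpr h.symm)

variable [Fintype V]

theorem utility_eq_of_adj_iff (hG : ∀ v w, G.Adj v w ↔ w = ν v) (f : P → P → ℝ) (π : P ≃ V)
    (p : P) : utility G f π p = f p (π.symm (ν (π p))) := by
  simp [utility, hG]

theorem envyFree_iff_forall_le_of_adj_iff (hG : ∀ v w, G.Adj v w ↔ w = ν v)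
    (f : P → P → ℝ) (π : P ≃ V) :
    envyFree G f π ↔ ∀ p r, r ≠ p → f p r ≤ f p (π.symm (ν (π p))) := by
  set μ : P → P := fun p => π.symm (ν (π p))
  have hμ : Function.Involutive μ := involutive_equiv_conj (involutive_of_adj_iff hG) π
  have hμfix : ∀ p, μ p ≠ p := equiv_conj_ne_self (ne_self_of_adj_iff hG) π
  have hswap (p q : P) : utility G f (swapArr π p q) p = f p (Equiv.swap p q (μ q)) := by
    rw [utility_eq_of_adj_iff hG, swapArr_apply_left, swapArr_symm_apply]
  simp only [envyFree, hswap, utility_eq_of_adj_iff hG]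
  constructor
  · intro henvy p r hrp
    by_cases hr : r = μ p
    · rw [hr]
    · have hpq : p ≠ μ r := fun h => hr (by rw [h, hμ])
      have hrq : r ≠ μ r := (hμfix r).symm
      simpa [hμ r, Equiv.swap_apply_of_ne_of_ne hrp hrq] using henvy p (μ r) hpq
  · intro hbest p q _
    refine hbest p _ fun h => hμfix q ?_
    simpa using congrArg (Equiv.swap p q) h

end SeatmateGraph

end SeatArrangement

theorem envyFree_iff_mutual_best_pairing {P V : Type*} [Fintype P] [Fintype V]
    (G : SimpleGraph V) (f : P → P → ℝ)
    (hmatch : ∀ v : V, ∃! w : V, G.Adj v w)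
    (hne : Nonempty (P ≃ V)) :
    (∃ π : P ≃ V, envyFree G f π) ↔
    (∃ μ : P → P, Function.Involutive μ ∧ (∀ p : P, μ p ≠ p) ∧
      ∀ p r : P, r ≠ p → f p r ≤ f p (μ p)) := by
  choose ν hν using hmatch
  have hG (v w : V) : G.Adj v w ↔ w = ν v := ⟨(hν v).2 w, fun h => h ▸ (hν v).1⟩
  have hνinv := involutive_of_adj_iff hG
  constructor
  · rintro ⟨π, hπ⟩
    exact ⟨_, involutive_equiv_conj hνinv π, equiv_conj_ne_self (ne_self_of_adj_iff hG) π,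
      (envyFree_iff_forall_le_of_adj_iff hG f π).mp hπ⟩
  · rintro ⟨μ, hμ, hμfix, hbest⟩
    obtain ⟨π, hπ⟩ := hμ.exists_equiv_comp_eq_of_ne_self hne.some hνinv hμfix
      (ne_self_of_adj_iff hG)
    refine ⟨π, (envyFree_iff_forall_le_of_adj_iff hG f π).mpr ?_⟩
    simpa [← hπ] using hbest
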